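/- For the risk-minimizing linear solution β* of D_{p,p'}^η with p, p' ∈ [ε, 1−ε]^n, |p_i − p_i'| ≥ ε for all i, and 0 ≤ η < 1/2, the sign of β_i equals the sign of p_i − p_i'. In particular each β_i is nonzero, and |β_i| ∈ [k(1−2η)ε/M, k(1−2η)M] for some constant M = M(ε) ≥ 1 independent of n, where k is the normalizing constant from the explicit solution formula. -/
import Mathlib


open MeasureTheory ProbabilityTheory

/-- The real value `±1` encoded by a Boolean. -/
noncomputable def pmOne (b : Bool) : ℝ := if b then 1 else -1

/-- Mass function of `n` independent `±1` features, where feature `i` equals `1`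
(i.e. `true`) with probability `p i`. -/
noncomputable def bpMass {n : ℕ} (p : Fin n → ℝ) (x : Fin n → Bool) : ℝ :=
  ∏ i, if x i then p i else 1 - p i

/-- The distribution `B_p` of `n` independent `±1` features with `P[X_i = 1] = p i`. -/
noncomputable def bpMeasure {n : ℕ} (p : Fin n → ℝ) : Measure (Fin n → Bool) :=
  ∑ x : Fin n → Bool, ENNReal.ofReal (bpMass p x) • Measure.dirac x

/-- Mass function of the toy distribution `D_{p,p'}^η` on triples `ω = (x, y, z)`:
`z` is uniform on `{−1,1}`; given `z = 1` the features are `B_p`-distributed, given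
`z = −1` they are `B_{p'}`-distributed; `y = z` with probability `1−η`, else `y = −z`. -/
noncomputable def toyMass {n : ℕ} (p p' : Fin n → ℝ) (η : ℝ)
    (ω : (Fin n → Bool) × Bool × Bool) : ℝ :=
  (1/2) * bpMass (if ω.2.2 then p else p') ω.1 * (if ω.2.1 = ω.2.2 then 1 - η else η)

/-- The toy distribution `D_{p,p'}^η` as a measure on `(x, y, z)` triples. -/
noncomputable def toyMeasure {n : ℕ} (p p' : Fin n → ℝ) (η : ℝ) :
    Measure ((Fin n → Bool) × Bool × Bool) :=
  ∑ ω : (Fin n → Bool) × Bool × Bool, ENNReal.ofReal (toyMass p p' η ω) • Measure.dirac ω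

/-- The squared risk `E[(β₀ + Σ βᵢ Xᵢ − Y)²]` of a linear predictor against the noisy
label `Y`, under `D_{p,p'}^η`. -/
noncomputable def toyRisk {n : ℕ} (p p' : Fin n → ℝ) (η : ℝ) (β0 : ℝ) (β : Fin n → ℝ) : ℝ :=
  ∫ ω, (β0 + ∑ i, β i * pmOne (ω.1 i) - pmOne ω.2.1)^2 ∂(toyMeasure p p' η)

/-- The normalizing constant `k(p, p')` from the explicit risk-minimizing solution. -/
noncomputable def kConst {n : ℕ} (p p' : Fin n → ℝ) : ℝ :=
  1 / (1 + ∑ i, (p i - p' i)^2 /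
    (1 - (1/2) * (2 * p i - 1)^2 - (1/2) * (2 * p' i - 1)^2))

lemma sum_prod_bool {n : ℕ} (h : Fin n → Bool → ℝ) :
    ∑ x : Fin n → Bool, ∏ k, h k (x k) = ∏ k, (h k true + h k false) := by
  have h1 := Finset.prod_univ_sum (fun _ : Fin n => (Finset.univ : Finset Bool)) h
  rw [Fintype.piFinset_univ] at h1
  rw [← h1]
  exact Finset.prod_congr rfl fun k _ => by rw [Fintype.sum_bool]

lemma bp_sum {n : ℕ} (q : Fin n → ℝ) : ∑ x : Fin n → Bool, bpMass q x = 1 := by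
  simp only [bpMass]
  rw [sum_prod_bool (fun k b => if b then q k else 1 - q k)]
  simp

lemma bp_sum_pm {n : ℕ} (q : Fin n → ℝ) (i : Fin n) :
    ∑ x : Fin n → Bool, bpMass q x * pmOne (x i) = 2 * q i - 1 := by
  have h1 : ∀ x : Fin n → Bool, bpMass q x * pmOne (x i)
      = ∏ k, ((if x k then q k else 1 - q k) * (if k = i then pmOne (x k) else 1)) := by
    intro x
    rw [Finset.prod_mul_distrib, Finset.prod_ite_eq' Finset.univ i (fun k => pmOne (x k))]
    simp [bpMass]
  simp only [h1]
  rw [sum_prod_bool (fun k b => (if b then q k else 1 - q k) * (if k = i then pmOne b else 1))]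
  have h2 : ∀ k : Fin n, ((if (true : Bool) then q k else 1 - q k) * (if k = i then pmOne true else 1)
      + (if (false : Bool) then q k else 1 - q k) * (if k = i then pmOne false else 1))
      = if k = i then 2 * q k - 1 else 1 := by
    intro k; by_cases hk : k = i <;> simp [hk, pmOne] <;> ring
  rw [Finset.prod_congr rfl (fun k _ => h2 k),
    Finset.prod_ite_eq' Finset.univ i (fun k => 2 * q k - 1)]
  simp

lemma bp_sum_pm2 {n : ℕ} (q : Fin n → ℝ) (i j : Fin n) (hij : i ≠ j) :
    ∑ x : Fin n → Bool, bpMass q x * (pmOne (x i) * pmOne (x j))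
      = (2 * q i - 1) * (2 * q j - 1) := by
  have h1 : ∀ x : Fin n → Bool, bpMass q x * (pmOne (x i) * pmOne (x j))
      = ∏ k, ((if x k then q k else 1 - q k) *
          ((if k = i then pmOne (x k) else 1) * (if k = j then pmOne (x k) else 1))) := by
    intro x
    rw [Finset.prod_mul_distrib, Finset.prod_mul_distrib,
      Finset.prod_ite_eq' Finset.univ i (fun k => pmOne (x k)),
      Finset.prod_ite_eq' Finset.univ j (fun k => pmOne (x k))]
    simp [bpMass]
  simp only [h1]
  rw [sum_prod_bool (fun k b => (if b then q k else 1 - q k) *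
    ((if k = i then pmOne b else 1) * (if k = j then pmOne b else 1)))]
  have h2 : ∀ k : Fin n, ((if (true : Bool) then q k else 1 - q k) *
        ((if k = i then pmOne true else 1) * (if k = j then pmOne true else 1))
      + (if (false : Bool) then q k else 1 - q k) *
        ((if k = i then pmOne false else 1) * (if k = j then pmOne false else 1)))
      = (if k = i then 2 * q k - 1 else 1) * (if k = j then 2 * q k - 1 else 1) := by
    intro k
    by_cases hk : k = i
    · subst hk
      simp [hij, pmOne]
      ring
    · by_cases hk' : k = j
      · subst hk'
        simp [hk, Ne.symm hij, pmOne]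
        ring
      · simp [hk, hk', pmOne]
  rw [Finset.prod_congr rfl (fun k _ => h2 k), Finset.prod_mul_distrib,
    Finset.prod_ite_eq' Finset.univ i (fun k => 2 * q k - 1),
    Finset.prod_ite_eq' Finset.univ j (fun k => 2 * q k - 1)]
  simp

lemma bp_sum_S {n : ℕ} (q : Fin n → ℝ) (γ : Fin n → ℝ) :
    ∑ x : Fin n → Bool, bpMass q x * (∑ i, γ i * pmOne (x i))
      = ∑ i, γ i * (2 * q i - 1) := by
  simp only [Finset.mul_sum]
  rw [Finset.sum_comm]
  refine Finset.sum_congr rfl fun i _ => ?_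
  calc ∑ x : Fin n → Bool, bpMass q x * (γ i * pmOne (x i))
      = γ i * ∑ x : Fin n → Bool, bpMass q x * pmOne (x i) := by
        rw [Finset.mul_sum]; exact Finset.sum_congr rfl fun x _ => by ring
    _ = γ i * (2 * q i - 1) := by rw [bp_sum_pm]

lemma bp_sum_S2 {n : ℕ} (q : Fin n → ℝ) (γ : Fin n → ℝ) :
    ∑ x : Fin n → Bool, bpMass q x * (∑ i, γ i * pmOne (x i))^2
      = (∑ i, (γ i)^2 * (1 - (2 * q i - 1)^2)) + (∑ i, γ i * (2 * q i - 1))^2 := by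
  have inner : ∀ i j : Fin n, ∑ x : Fin n → Bool, bpMass q x * (pmOne (x i) * pmOne (x j))
      = (2*q i-1) * (2*q j-1) + (if i = j then 1 - (2*q i-1)^2 else 0) := by
    intro i j
    by_cases hij : i = j
    · subst hij
      have hpm : ∀ b : Bool, pmOne b * pmOne b = 1 := by intro b; cases b <;> simp [pmOne]
      simp only [hpm, mul_one, bp_sum]
      simp only [if_true]
      ring
    · rw [bp_sum_pm2 q i j hij, if_neg hij]; ring
  have hsq : ∀ x : Fin n → Bool, bpMass q x * (∑ i, γ i * pmOne (x i))^2
      = ∑ i, ∑ j, (γ i * γ j) * (bpMass q x * (pmOne (x i) * pmOne (x j))) := by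
    intro x
    rw [sq, Finset.sum_mul_sum]
    rw [Finset.mul_sum]
    refine Finset.sum_congr rfl fun i _ => ?_
    rw [Finset.mul_sum]
    exact Finset.sum_congr rfl fun j _ => by ring
  simp only [hsq]
  rw [Finset.sum_comm]
  have swap2 : ∀ i : Fin n, ∑ x : Fin n → Bool, ∑ j, (γ i * γ j) * (bpMass q x * (pmOne (x i) * pmOne (x j)))
      = ∑ j, (γ i * γ j) * ((2*q i-1) * (2*q j-1) + (if i = j then 1 - (2*q i-1)^2 else 0)) := by
    intro i
    rw [Finset.sum_comm]
    refine Finset.sum_congr rfl fun j _ => ?_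
    rw [← Finset.mul_sum, inner i j]
  simp only [swap2]
  have expand : ∀ i : Fin n, ∑ j, (γ i * γ j) * ((2*q i-1) * (2*q j-1) + (if i = j then 1 - (2*q i-1)^2 else 0))
      = (γ i * (2*q i-1)) * (∑ j, γ j * (2*q j-1)) + (γ i)^2 * (1 - (2*q i-1)^2) := by
    intro i
    have : ∀ j : Fin n, (γ i * γ j) * ((2*q i-1) * (2*q j-1) + (if i = j then 1 - (2*q i-1)^2 else 0))
        = (γ i * (2*q i-1)) * (γ j * (2*q j-1)) + (if i = j then γ i * γ j * (1 - (2*q i-1)^2) else 0) := by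
      intro j; by_cases h : i = j <;> simp [h] <;> ring
    simp only [this]
    rw [Finset.sum_add_distrib, ← Finset.mul_sum, Finset.sum_ite_eq]
    simp only [Finset.mem_univ, if_true]
    ring
  simp only [expand]
  rw [Finset.sum_add_distrib, ← Finset.sum_mul]
  ring

lemma toyMass_nonneg {n : ℕ} {p p' : Fin n → ℝ} {η : ℝ}
    (hp : ∀ i, 0 ≤ p i ∧ p i ≤ 1) (hp' : ∀ i, 0 ≤ p' i ∧ p' i ≤ 1)
    (hη0 : 0 ≤ η) (hη1 : η ≤ 1) (ω : (Fin n → Bool) × Bool × Bool) :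
    0 ≤ toyMass p p' η ω := by
  unfold toyMass
  have hbp : 0 ≤ bpMass (if ω.2.2 then p else p') ω.1 := by
    unfold bpMass
    refine Finset.prod_nonneg fun k _ => ?_
    cases hz : ω.2.2 <;> cases hx : ω.1 k <;>
      simp [(hp k).1, (hp k).2, (hp' k).1, (hp' k).2, sub_nonneg]
  have hw : 0 ≤ (if ω.2.1 = ω.2.2 then 1 - η else η) := by
    split <;> linarith
  positivity

lemma toy_integral {n : ℕ} (p p' : Fin n → ℝ) (η : ℝ)
    (h0 : ∀ ω, 0 ≤ toyMass p p' η ω) (f : ((Fin n → Bool) × Bool × Bool) → ℝ) :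
    ∫ ω, f ω ∂(toyMeasure p p' η) = ∑ ω, toyMass p p' η ω * f ω := by
  rw [toyMeasure, MeasureTheory.integral_finset_sum_measure]
  · exact Finset.sum_congr rfl fun ω _ => by
      rw [MeasureTheory.integral_smul_measure, MeasureTheory.integral_dirac, smul_eq_mul,
        ENNReal.toReal_ofReal (h0 ω)]
  · intro ω _
    have : IsFiniteMeasure (ENNReal.ofReal (toyMass p p' η ω) • Measure.dirac ω) := by
      constructor
      rw [Measure.smul_apply, Measure.dirac_apply_of_mem (Set.mem_univ ω), smul_eq_mul, mul_one]
      exact ENNReal.ofReal_lt_top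
    exact Integrable.of_finite

lemma toyRisk_eq {n : ℕ} (p p' : Fin n → ℝ) (η : ℝ)
    (h0 : ∀ ω, 0 ≤ toyMass p p' η ω) (γ0 : ℝ) (γ : Fin n → ℝ) :
    toyRisk p p' η γ0 γ =
      (γ0 + ∑ i, γ i * (p i + p' i - 1))^2
      + (∑ i, (γ i)^2 * (1 - (1/2) * (2 * p i - 1)^2 - (1/2) * (2 * p' i - 1)^2))
      + (∑ i, γ i * (p i - p' i))^2
      - 2*(1 - 2*η) * (∑ i, γ i * (p i - p' i)) + 1 := by
  rw [toyRisk, toy_integral p p' η h0]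
  have expand : ∀ g : ((Fin n → Bool) × Bool × Bool) → ℝ,
      ∑ ω : (Fin n → Bool) × Bool × Bool, g ω
        = ∑ x : Fin n → Bool,
            (g (x, true, true) + g (x, true, false) + (g (x, false, true) + g (x, false, false))) := by
    intro g
    rw [Fintype.sum_prod_type]
    refine Finset.sum_congr rfl fun x _ => ?_
    rw [Fintype.sum_prod_type, Fintype.sum_bool, Fintype.sum_bool, Fintype.sum_bool]
  rw [expand]
  have point : ∀ x : Fin n → Bool,
      (toyMass p p' η (x, true, true) * (γ0 + ∑ i, γ i * pmOne (x i) - pmOne true)^2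
       + toyMass p p' η (x, true, false) * (γ0 + ∑ i, γ i * pmOne (x i) - pmOne true)^2
       + (toyMass p p' η (x, false, true) * (γ0 + ∑ i, γ i * pmOne (x i) - pmOne false)^2
       + toyMass p p' η (x, false, false) * (γ0 + ∑ i, γ i * pmOne (x i) - pmOne false)^2))
      = bpMass p x * ((1/2) * (∑ i, γ i * pmOne (x i))^2
          + (γ0 - (1-2*η)) * (∑ i, γ i * pmOne (x i)) + ((1/2)*γ0^2 - (1-2*η)*γ0 + 1/2))
      + bpMass p' x * ((1/2) * (∑ i, γ i * pmOne (x i))^2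
          + (γ0 + (1-2*η)) * (∑ i, γ i * pmOne (x i)) + ((1/2)*γ0^2 + (1-2*η)*γ0 + 1/2)) := by
    intro x
    simp [toyMass, pmOne]
    ring
  simp only [point]
  rw [Finset.sum_add_distrib]
  have key : ∀ (q : Fin n → ℝ) (a b c : ℝ),
      ∑ x : Fin n → Bool, bpMass q x * (a * (∑ i, γ i * pmOne (x i))^2
          + b * (∑ i, γ i * pmOne (x i)) + c)
        = a * ((∑ i, (γ i)^2 * (1 - (2*q i-1)^2)) + (∑ i, γ i * (2*q i-1))^2)
          + b * (∑ i, γ i * (2*q i-1)) + c := by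
    intro q a b c
    have h : ∀ x : Fin n → Bool, bpMass q x * (a * (∑ i, γ i * pmOne (x i))^2
          + b * (∑ i, γ i * pmOne (x i)) + c)
        = a * (bpMass q x * (∑ i, γ i * pmOne (x i))^2)
          + b * (bpMass q x * (∑ i, γ i * pmOne (x i))) + c * bpMass q x := fun x => by ring
    simp only [h]
    rw [Finset.sum_add_distrib, Finset.sum_add_distrib, ← Finset.mul_sum, ← Finset.mul_sum,
      ← Finset.mul_sum, bp_sum_S2, bp_sum_S, bp_sum, mul_one]
  rw [key p _ _ _, key p' _ _ _]
  have hU : ∑ i, γ i * (p i + p' i - 1)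
      = ((∑ i, γ i * (2*p i - 1)) + (∑ i, γ i * (2*p' i - 1)))/2 := by
    rw [← Finset.sum_add_distrib, Finset.sum_div]
    exact Finset.sum_congr rfl fun i _ => by ring
  have hD : ∑ i, γ i * (p i - p' i)
      = ((∑ i, γ i * (2*p i - 1)) - (∑ i, γ i * (2*p' i - 1)))/2 := by
    rw [← Finset.sum_sub_distrib, Finset.sum_div]
    exact Finset.sum_congr rfl fun i _ => by ring
  have hS : ∑ i, (γ i)^2 * (1 - (1/2) * (2 * p i - 1)^2 - (1/2) * (2 * p' i - 1)^2)
      = ((∑ i, (γ i)^2 * (1 - (2*p i-1)^2)) + (∑ i, (γ i)^2 * (1 - (2*p' i-1)^2)))/2 := by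
    rw [← Finset.sum_add_distrib, Finset.sum_div]
    exact Finset.sum_congr rfl fun i _ => by ring
  rw [hU, hD, hS]
  ring

lemma scalar_key (ε cc dd ss : ℝ) (hε : 0 < ε) (hε2 : ε < 1/2) (hcc : 0 < cc) (hss : 0 < ss)
    (hss1 : ss ≤ 1) (hsslb : 4*ε*(1-ε) ≤ ss) (hdl : ε ≤ |dd|) (hdu : |dd| ≤ 1) :
    (0 < cc*dd/ss ↔ 0 < dd) ∧ cc*dd/ss ≠ 0 ∧
      cc * ε / (1/(4*ε*(1-ε))) ≤ |cc*dd/ss| ∧ |cc*dd/ss| ≤ cc * (1/(4*ε*(1-ε))) := by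
  have hσ : 0 < 4*ε*(1-ε) := by nlinarith
  have hM1 : (1:ℝ) ≤ 1/(4*ε*(1-ε)) := by rw [le_div_iff₀ hσ]; nlinarith
  have habs : |cc*dd/ss| = cc * |dd| / ss := by
    rw [abs_div, abs_mul, abs_of_pos hcc, abs_of_pos hss]
  have hd0 : dd ≠ 0 := fun h => by rw [h, abs_zero] at hdl; linarith
  refine ⟨?_, ?_, ?_, ?_⟩
  · constructor
    · intro h
      rcases lt_trichotomy dd 0 with h' | h' | h'
      · exfalso
        have : cc*dd/ss < 0 := div_neg_of_neg_of_pos (mul_neg_of_pos_of_neg hcc h') hss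
        linarith
      · exact absurd h' hd0
      · exact h'
    · intro h
      exact div_pos (mul_pos hcc h) hss
  · exact div_ne_zero (mul_ne_zero hcc.ne' hd0) hss.ne'
  · rw [habs, div_le_div_iff₀ (by positivity) hss]
    have h1 : cc*ε*ss ≤ cc*ε := by nlinarith [mul_pos hcc hε]
    have h2 : cc*ε ≤ cc*|dd| := by nlinarith
    have h3 : cc*|dd| ≤ cc*|dd| * (1/(4*ε*(1-ε))) :=
      le_mul_of_one_le_right (by positivity) hM1
    linarith
  · rw [habs, div_le_iff₀ hss]
    have hMσ : (1/(4*ε*(1-ε))) * (4*ε*(1-ε)) = 1 := one_div_mul_cancel hσ.ne'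
    have h4 : cc * (1/(4*ε*(1-ε))) * (4*ε*(1-ε)) ≤ cc * (1/(4*ε*(1-ε))) * ss := by
      apply mul_le_mul_of_nonneg_left hsslb (by positivity)
    have h5 : cc * (1/(4*ε*(1-ε))) * (4*ε*(1-ε)) = cc := by
      rw [mul_assoc, hMσ, mul_one]
    have h6 : cc*|dd| ≤ cc := by nlinarith
    linarith

/-- Sign and magnitude of the risk-minimizing coefficients: the sign of `β_i` equals the
sign of `p_i − p_i'` (so `β_i ≠ 0`), and `|β_i| ∈ [k(1−2η)ε/M, k(1−2η)M]` for some
constant `M = M(ε) ≥ 1` independent of `n`, with `k = kConst p p'`. -/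
theorem stmt_7 (ε : ℝ) (hε : 0 < ε) (hε2 : ε < 1/2) :
    ∃ M : ℝ, 1 ≤ M ∧
      ∀ n : ℕ, ∀ p p' : Fin n → ℝ, ∀ η : ℝ,
        (∀ i, p i ∈ Set.Icc ε (1 - ε)) → (∀ i, p' i ∈ Set.Icc ε (1 - ε)) →
        (∀ i, ε ≤ |p i - p' i|) → 0 ≤ η → η < 1/2 →
        ∀ β0 : ℝ, ∀ β : Fin n → ℝ,
          (∀ γ0 : ℝ, ∀ γ : Fin n → ℝ, toyRisk p p' η β0 β ≤ toyRisk p p' η γ0 γ) →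
          ∀ i, (0 < β i ↔ p' i < p i) ∧ β i ≠ 0 ∧
            kConst p p' * (1 - 2 * η) * ε / M ≤ |β i| ∧
            |β i| ≤ kConst p p' * (1 - 2 * η) * M := by
  have hσ : 0 < 4*ε*(1-ε) := by nlinarith
  refine ⟨1/(4*ε*(1-ε)), ?_, ?_⟩
  · rw [le_div_iff₀ hσ]; nlinarith
  intro n p p' η hp hp' hdd hη0 hη12 β0 β hmin i
  -- basic bounds
  have hp01 : ∀ j, 0 ≤ p j ∧ p j ≤ 1 := fun j =>
    ⟨le_trans hε.le (hp j).1, le_trans (hp j).2 (by linarith)⟩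
  have hp'01 : ∀ j, 0 ≤ p' j ∧ p' j ≤ 1 := fun j =>
    ⟨le_trans hε.le (hp' j).1, le_trans (hp' j).2 (by linarith)⟩
  have h0 := toyMass_nonneg hp01 hp'01 hη0 (by linarith)
  have hs_lb : ∀ j, 4*ε*(1-ε) ≤ 1 - (1/2) * (2 * p j - 1)^2 - (1/2) * (2 * p' j - 1)^2 := by
    intro j
    obtain ⟨h1, h2⟩ := hp j; obtain ⟨h3, h4⟩ := hp' j
    nlinarith [sq_nonneg (2*p j - 1), sq_nonneg (2*p' j - 1)]
  have hs_pos : ∀ j, 0 < 1 - (1/2) * (2 * p j - 1)^2 - (1/2) * (2 * p' j - 1)^2 :=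
    fun j => lt_of_lt_of_le hσ (hs_lb j)
  have hs_ub : ∀ j, 1 - (1/2) * (2 * p j - 1)^2 - (1/2) * (2 * p' j - 1)^2 ≤ 1 := by
    intro j; nlinarith [sq_nonneg (2*p j - 1), sq_nonneg (2*p' j - 1)]
  have hd_ub : ∀ j, |p j - p' j| ≤ 1 := by
    intro j
    obtain ⟨h1, h2⟩ := hp j; obtain ⟨h3, h4⟩ := hp' j
    rw [abs_le]; constructor <;> nlinarith
  set T := ∑ j, (p j - p' j)^2 /
      (1 - (1/2) * (2 * p j - 1)^2 - (1/2) * (2 * p' j - 1)^2) with hT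
  have hT0 : 0 ≤ T := by
    rw [hT]
    exact Finset.sum_nonneg fun j _ => div_nonneg (sq_nonneg _) (hs_pos j).le
  have hkc : kConst p p' = 1/(1+T) := by rw [hT]; rfl
  have hκ : 0 < 1 - 2*η := by linarith
  have hc0 : 0 < kConst p p' * (1 - 2*η) := by
    apply mul_pos _ hκ
    rw [hkc]; positivity
  set c := kConst p p' * (1 - 2*η) with hcdef
  -- the candidate minimizer
  set B : Fin n → ℝ := fun j => c * (p j - p' j) /
      (1 - (1/2) * (2 * p j - 1)^2 - (1/2) * (2 * p' j - 1)^2) with hB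
  have hle := hmin (-(∑ j, B j * (p j + p' j - 1))) B
  rw [toyRisk_eq p p' η h0 β0 β, toyRisk_eq p p' η h0 _ B] at hle
  have hzero : -(∑ j, B j * (p j + p' j - 1)) + ∑ j, B j * (p j + p' j - 1) = 0 := by ring
  rw [hzero] at hle
  have hBd : ∑ j, B j * (p j - p' j) = c * T := by
    rw [hT, Finset.mul_sum]
    exact Finset.sum_congr rfl fun j _ => by rw [hB]; ring
  have genkey : ∀ s d : ℝ, s ≠ 0 → (c*d/s)^2 * s = c^2 * (d^2/s) := by
    intro s d hs; field_simp
  have genkey2 : ∀ s d b : ℝ, s ≠ 0 →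
      b^2*s = (b - c*d/s)^2*s + 2*c*(b*d) - c^2*(d^2/s) := by
    intro s d b hs; field_simp; ring
  have hBss : ∑ j, (B j)^2 * (1 - (1/2) * (2 * p j - 1)^2 - (1/2) * (2 * p' j - 1)^2) = c^2 * T := by
    rw [hT, Finset.mul_sum]
    refine Finset.sum_congr rfl fun j _ => ?_
    rw [hB]
    exact genkey _ _ (hs_pos j).ne'
  have hβss : ∑ j, (β j)^2 * (1 - (1/2) * (2 * p j - 1)^2 - (1/2) * (2 * p' j - 1)^2)
      = (∑ j, (β j - B j)^2 * (1 - (1/2) * (2 * p j - 1)^2 - (1/2) * (2 * p' j - 1)^2))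
        + 2*c*(∑ j, β j * (p j - p' j)) - c^2 * T := by
    rw [hT, Finset.mul_sum, Finset.mul_sum]
    rw [← Finset.sum_add_distrib, ← Finset.sum_sub_distrib]
    refine Finset.sum_congr rfl fun j _ => ?_
    rw [hB]
    exact genkey2 _ _ _ (hs_pos j).ne'
  rw [hBd, hBss, hβss] at hle
  have hck : (1 - 2*η) = c + c * T := by
    rw [hcdef, hkc]
    have : (1:ℝ) + T ≠ 0 := by positivity
    field_simp
  rw [hck] at hle
  set Q := ∑ j, (β j - B j)^2 * (1 - (1/2) * (2 * p j - 1)^2 - (1/2) * (2 * p' j - 1)^2) with hQ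
  have hQ0 : 0 ≤ Q := by
    rw [hQ]
    exact Finset.sum_nonneg fun j _ => mul_nonneg (sq_nonneg _) (hs_pos j).le
  have hQle : Q ≤ 0 := by
    nlinarith [sq_nonneg (β0 + ∑ j, β j * (p j + p' j - 1)),
      sq_nonneg ((∑ j, β j * (p j - p' j)) - c * T)]
  have hQeq : Q = 0 := le_antisymm hQle hQ0
  have hterm : ∀ j, (β j - B j)^2 * (1 - (1/2) * (2 * p j - 1)^2 - (1/2) * (2 * p' j - 1)^2) = 0 := by
    intro j
    have := (Finset.sum_eq_zero_iff_of_nonneg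
      (fun j _ => mul_nonneg (sq_nonneg (β j - B j)) (hs_pos j).le)).mp (hQ ▸ hQeq)
    exact this j (Finset.mem_univ j)
  have hβB : ∀ j, β j = B j := by
    intro j
    have h1 := hterm j
    have h2 : (β j - B j)^2 = 0 := by
      rcases mul_eq_zero.mp h1 with h | h
      · exact h
      · exact absurd h (hs_pos j).ne'
    have := pow_eq_zero_iff (n := 2) (by norm_num) |>.mp h2
    linarith [this]
  -- conclusions
  have hβi : β i = kConst p p' * (1 - 2*η) * (p i - p' i) /
      (1 - (1/2) * (2 * p i - 1)^2 - (1/2) * (2 * p' i - 1)^2) := by rw [hβB i, hB]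
  obtain ⟨k1, k2, k3, k4⟩ := scalar_key ε (kConst p p' * (1 - 2*η)) (p i - p' i)
    (1 - (1/2) * (2 * p i - 1)^2 - (1/2) * (2 * p' i - 1)^2) hε hε2 hc0 (hs_pos i)
    (hs_ub i) (hs_lb i) (hdd i) (hd_ub i)
  refine ⟨by rw [hβi]; exact k1.trans sub_pos, by rw [hβi]; exact k2,
    by rw [hβi]; exact k3, by rw [hβi]; exact k4⟩
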